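/- Multi-type final size equations: for every vector ℓ = (ℓ_1,…,ℓ_k) with 0 ≤ ℓ ≤ L coordinatewise, Σ_{u=0}^{ℓ} [∏_{i=1}^k C(L_i−u_i, ℓ_i−u_i)] · P_u · ∏_{i=1}^k ∏_{j=1}^k (1−p_{ij})^{−(1[i=1]+u_i)(L_j−ℓ_j)} = ∏_{i=1}^k C(L_i, ℓ_i), where the sum is over all integer vectors u = (u_1,…,u_k) with 0 ≤ u ≤ ℓ coordinatewise and C(a,b) denotes the binomial coefficient. -/

import Mathlib

open Classical

noncomputable section

/-- Probability of the event `E` when, independently, each coordinate `i` is `true`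
with probability `q i` (and `false` with probability `1 - q i`). -/
noncomputable def pr {ι : Type*} [Fintype ι] (q : ι → ℝ) (E : Set (ι → Bool)) : ℝ :=
  ∑ ω ∈ Finset.univ.filter (· ∈ E), ∏ i, (if ω i then q i else 1 - q i)

/-- The vertex set of the multi-type epidemic with `k + 1` types: type `i` consists of
`L i` vertices, plus one extra distinguished vertex of type `0` (the initial infective). -/
abbrev MVert (k : ℕ) (L : Fin (k + 1) → ℕ) : Type :=
  (i : Fin (k + 1)) × Fin (L i + if i = 0 then 1 else 0)

/-- The distinguished initially infective vertex `v₀`, of type `0`. -/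
def mv0 (k : ℕ) (L : Fin (k + 1) → ℕ) : MVert k L :=
  ⟨0, ⟨0, by simp⟩⟩

/-- In the random directed graph in which, independently for each ordered pair `(u, v)` of
distinct vertices with `u` of type `i` and `v` of type `j`, the arc `u → v` is present with
probability `p i j`, `mU k L u ω i` is the number of type-`i` vertices other than `v₀`
reachable from `v₀` by a directed path in the configuration `ω`. -/
noncomputable def mU (k : ℕ) (L : Fin (k + 1) → ℕ)
    (ω : MVert k L × MVert k L → Bool) (i : Fin (k + 1)) : ℕ :=
  (Finset.univ.filter fun x : MVert k L => x.1 = i ∧ x ≠ mv0 k L ∧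
    Relation.ReflTransGen (fun a b => a ≠ b ∧ ω (a, b) = true) (mv0 k L) x).card

/-- `Pmulti k L p u` : the probability that the vector of numbers of ultimately recovered
individuals (excluding the initial infective `v₀`) equals `u`. -/
noncomputable def Pmulti (k : ℕ) (L : Fin (k + 1) → ℕ)
    (p : Fin (k + 1) → Fin (k + 1) → ℝ) (u : Fin (k + 1) → ℕ) : ℝ :=
  pr (fun e : MVert k L × MVert k L => p e.1.1 e.2.1)
    {ω | ∀ i, mU k L ω i = u i}

namespace Ball
variable {ι : Type*} [Fintype ι]
set_option linter.unusedSectionVars false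
def w (q : ι → ℝ) (i : ι) (b : Bool) : ℝ := if b then q i else 1 - q i
lemma pr_eq_sum_ite (q : ι → ℝ) (E : Set (ι → Bool)) :
    pr q E = ∑ ω : ι → Bool, (if ω ∈ E then ∏ i, w q i (ω i) else 0) := by
  rw [pr, Finset.sum_filter]; rfl
lemma sum_prod_bool (f : ι → Bool → ℝ) :
    ∑ ω : ι → Bool, ∏ i, f i (ω i) = ∏ i, (f i true + f i false) := by
  classical
  have h := Finset.prod_univ_sum (fun _ : ι => (Finset.univ : Finset Bool)) f
  rw [Fintype.piFinset_univ] at h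
  rw [← h]
  exact Finset.prod_congr rfl fun i _ => by simp [Fintype.sum_bool]
def DependsOn (E : Set (ι → Bool)) (T : Finset ι) : Prop :=
  ∀ ω ω' : ι → Bool, (∀ i ∈ T, ω i = ω' i) → (ω ∈ E ↔ ω' ∈ E)
lemma DependsOn.mono {E : Set (ι → Bool)} {T T' : Finset ι} (h : DependsOn E T)
    (hTT : T ⊆ T') : DependsOn E T' :=
  fun ω ω' ha => h ω ω' fun i hi => ha i (hTT hi)

def cube (T : Finset ι) : Finset (ι → Bool) :=
  Fintype.piFinset (fun i => if i ∈ T then Finset.univ else {false})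

lemma mem_cube {T : Finset ι} {a : ι → Bool} : a ∈ cube T ↔ ∀ i ∉ T, a i = false := by
  simp only [cube, Fintype.mem_piFinset]
  constructor
  · intro h i hi
    have := h i
    rw [if_neg hi] at this
    simpa using this
  · intro h i
    by_cases hi : i ∈ T
    · rw [if_pos hi]; exact Finset.mem_univ _
    · rw [if_neg hi]; simp [h i hi]

lemma sum_cube (T : Finset ι) (g : ι → Bool → ℝ) :
    ∑ a ∈ cube T, ∏ i ∈ T, g i (a i) = ∏ i ∈ T, (g i true + g i false) := by
  classical
  have key : ∀ a ∈ cube T, ∏ i ∈ T, g i (a i)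
      = ∏ i, (fun i b => if i ∈ T then g i b else 1) i (a i) := by
    intro a _
    rw [show (∏ i, (fun i b => if i ∈ T then g i b else 1) i (a i))
        = ∏ i, (if i ∈ T then g i (a i) else 1) from rfl, Finset.prod_ite_mem,
      Finset.univ_inter]
  rw [Finset.sum_congr rfl key]
  have h := Finset.prod_univ_sum (fun i : ι => if i ∈ T then (Finset.univ : Finset Bool) else {false})
    (fun i b => if i ∈ T then g i b else 1)
  rw [show Fintype.piFinset (fun i : ι => if i ∈ T then (Finset.univ : Finset Bool) else {false}) = cube T from rfl] at h
  rw [← h]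
  have hr : ∏ i ∈ T, (g i true + g i false) = ∏ i, (if i ∈ T then (g i true + g i false) else 1) := by
    rw [Finset.prod_ite_mem, Finset.univ_inter]
  rw [hr]
  refine Finset.prod_congr rfl fun i _ => ?_
  by_cases hi : i ∈ T <;> simp [hi]

lemma pr_univ (q : ι → ℝ) : pr q Set.univ = 1 := by
  rw [pr_eq_sum_ite]
  simp only [Set.mem_univ, if_true]
  rw [sum_prod_bool]
  simp [w]

lemma pr_allFalse (q : ι → ℝ) (T' : Finset ι) :
    pr q {ω | ∀ e ∈ T', ω e = false} = ∏ e ∈ T', (1 - q e) := by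
  classical
  rw [pr_eq_sum_ite]
  have key : ∀ ω : ι → Bool,
      (@ite ℝ (ω ∈ {ω : ι → Bool | ∀ e ∈ T', ω e = false})
        (propDecidable (ω ∈ {ω : ι → Bool | ∀ e ∈ T', ω e = false})) (∏ i, w q i (ω i)) 0)
      = ∏ i, (fun i b => if i ∈ T' then (if b then 0 else 1 - q i) else w q i b) i (ω i) := by
    intro ω
    by_cases h : ∀ e ∈ T', ω e = false
    · rw [if_pos (show ω ∈ {ω : ι → Bool | ∀ e ∈ T', ω e = false} from h)]
      refine Finset.prod_congr rfl fun i _ => ?_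
      by_cases hi : i ∈ T'
      · simp [w, hi, h i hi]
      · simp only [hi, if_false]
    · rw [if_neg (show ω ∉ {ω : ι → Bool | ∀ e ∈ T', ω e = false} from h)]
      push_neg at h
      obtain ⟨e, he, hne⟩ := h
      have : ω e = true := by simpa using hne
      exact (Finset.prod_eq_zero (Finset.mem_univ e) (by simp [he, this])).symm
  refine (Finset.sum_congr rfl fun ω _ => key ω).trans ?_
  rw [sum_prod_bool (fun i b => if i ∈ T' then (if b then 0 else 1 - q i) else w q i b)]
  have hr : ∏ e ∈ T', (1 - q e) = ∏ i, (if i ∈ T' then (1 - q i) else 1) := by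
    rw [Finset.prod_ite_mem, Finset.univ_inter]
  rw [hr]
  refine Finset.prod_congr rfl fun i _ => ?_
  by_cases hi : i ∈ T' <;> simp [hi, w]

lemma pr_inter (q : ι → ℝ) (E₁ E₂ : Set (ι → Bool)) (T : Finset ι)
    (h₁ : DependsOn E₁ T)
    (h₂ : ∀ ω ω' : ι → Bool, (∀ i ∉ T, ω i = ω' i) → (ω ∈ E₂ ↔ ω' ∈ E₂)) :
    pr q (E₁ ∩ E₂) = pr q E₁ * pr q E₂ := by
  classical
  set m : (ι → Bool) → (ι → Bool) → (ι → Bool) :=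
    fun a b i => if i ∈ T then a i else b i with hm
  have hsum : ∀ F : (ι → Bool) → ℝ,
      ∑ ω : ι → Bool, F ω = ∑ a ∈ cube T, ∑ b ∈ cube Tᶜ, F (m a b) := by
    intro F
    rw [show (∑ a ∈ cube T, ∑ b ∈ cube Tᶜ, F (m a b))
        = ∑ x ∈ (cube T) ×ˢ (cube Tᶜ), F (m x.1 x.2) from (Finset.sum_product (cube T) (cube Tᶜ) (fun x => F (m x.1 x.2))).symm]
    refine Finset.sum_nbij' (fun ω => ((fun i => if i ∈ T then ω i else false),
      (fun i => if i ∈ T then false else ω i))) (fun ab => m ab.1 ab.2) ?_ ?_ ?_ ?_ ?_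
    · intro ω _
      rw [Finset.mem_product]
      constructor
      · rw [mem_cube]; intro i hi; simp [hi]
      · rw [mem_cube]; intro i hi
        have : i ∈ T := by simpa using hi
        simp [this]
    · intro ab _; exact Finset.mem_univ _
    · intro ω _
      funext i
      by_cases hi : i ∈ T <;> simp [hm, hi]
    · intro ab hab
      rw [Finset.mem_product, mem_cube, mem_cube] at hab
      have ⟨ha, hb⟩ := hab
      ext : 1
      · funext i
        by_cases hi : i ∈ T
        · simp [hm, hi]
        · simp [hm, hi, ha i hi]
      · funext i
        by_cases hi : i ∈ T
        · simp [hm, hi, hb i (by simpa using hi)]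
        · simp [hm, hi]
    · intro ω _
      have : m (fun i => if i ∈ T then ω i else false) (fun i => if i ∈ T then false else ω i) = ω := by
        funext i; by_cases hi : i ∈ T <;> simp [hm, hi]
      rw [this]
  have hw : ∀ a b, ∏ i, w q i (m a b i) =
      (∏ i ∈ T, w q i (a i)) * (∏ i ∈ Tᶜ, w q i (b i)) := by
    intro a b
    rw [← Finset.prod_mul_prod_compl T (fun i => w q i (m a b i))]
    congr 1
    · exact Finset.prod_congr rfl fun i hi => by rw [hm]; simp [hi]
    · refine Finset.prod_congr rfl fun i hi => ?_
      have hi' : i ∉ T := by simpa using hi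
      rw [hm]; simp [hi']
  have hmem1 : ∀ a b b', (m a b ∈ E₁ ↔ m a b' ∈ E₁) := by
    intro a b b'
    refine h₁ _ _ fun i hi => ?_
    simp [hm, hi]
  have hmem2 : ∀ a a' b, (m a b ∈ E₂ ↔ m a' b ∈ E₂) := by
    intro a a' b
    refine h₂ _ _ fun i hi => ?_
    simp [hm, hi]
  have hA : ∑ a ∈ cube T, ∏ i ∈ T, w q i (a i) = 1 := by
    rw [sum_cube]; simp [w]
  have hB : ∑ b ∈ cube Tᶜ, ∏ i ∈ Tᶜ, w q i (b i) = 1 := by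
    rw [sum_cube]; simp [w]
  set b₀ : ι → Bool := fun _ => false with hb₀
  set a₀ : ι → Bool := fun _ => false with ha₀
  have key : ∀ E : Set (ι → Bool), pr q E =
      ∑ a ∈ cube T, ∑ b ∈ cube Tᶜ,
        (if m a b ∈ E then 1 else 0) * ((∏ i ∈ T, w q i (a i)) * (∏ i ∈ Tᶜ, w q i (b i))) := by
    intro E
    rw [pr_eq_sum_ite, hsum]
    refine Finset.sum_congr rfl fun a _ => Finset.sum_congr rfl fun b _ => ?_
    rw [hw]
    by_cases h : m a b ∈ E <;> simp [h]
  have e1 : pr q E₁ = ∑ a ∈ cube T, (if m a b₀ ∈ E₁ then 1 else 0) * ∏ i ∈ T, w q i (a i) := by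
    rw [key]
    calc ∑ a ∈ cube T, ∑ b ∈ cube Tᶜ,
          (if m a b ∈ E₁ then (1:ℝ) else 0) * ((∏ i ∈ T, w q i (a i)) * (∏ i ∈ Tᶜ, w q i (b i)))
        = ∑ a ∈ cube T, ∑ b ∈ cube Tᶜ,
          ((if m a b₀ ∈ E₁ then (1:ℝ) else 0) * ∏ i ∈ T, w q i (a i)) * (∏ i ∈ Tᶜ, w q i (b i)) := by
          refine Finset.sum_congr rfl fun a _ => Finset.sum_congr rfl fun b _ => ?_
          by_cases h : m a b ∈ E₁
          · rw [if_pos h, if_pos ((hmem1 a b b₀).1 h)]; ring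
          · rw [if_neg h, if_neg (fun hc => h ((hmem1 a b₀ b).1 hc))]; ring
      _ = ∑ a ∈ cube T, ((if m a b₀ ∈ E₁ then (1:ℝ) else 0) * ∏ i ∈ T, w q i (a i))
            * ∑ b ∈ cube Tᶜ, ∏ i ∈ Tᶜ, w q i (b i) := by
          refine Finset.sum_congr rfl fun a _ => ?_; rw [← Finset.mul_sum]
      _ = _ := by rw [hB]; simp
  have e2 : pr q E₂ = ∑ b ∈ cube Tᶜ, (if m a₀ b ∈ E₂ then 1 else 0) * ∏ i ∈ Tᶜ, w q i (b i) := by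
    rw [key, Finset.sum_comm]
    calc ∑ b ∈ cube Tᶜ, ∑ a ∈ cube T,
          (if m a b ∈ E₂ then (1:ℝ) else 0) * ((∏ i ∈ T, w q i (a i)) * (∏ i ∈ Tᶜ, w q i (b i)))
        = ∑ b ∈ cube Tᶜ, ∑ a ∈ cube T,
          ((if m a₀ b ∈ E₂ then (1:ℝ) else 0) * ∏ i ∈ Tᶜ, w q i (b i)) * (∏ i ∈ T, w q i (a i)) := by
          refine Finset.sum_congr rfl fun b _ => Finset.sum_congr rfl fun a _ => ?_
          by_cases h : m a b ∈ E₂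
          · rw [if_pos h, if_pos ((hmem2 a a₀ b).1 h)]; ring
          · rw [if_neg h, if_neg (fun hc => h ((hmem2 a₀ a b).1 hc))]; ring
      _ = ∑ b ∈ cube Tᶜ, ((if m a₀ b ∈ E₂ then (1:ℝ) else 0) * ∏ i ∈ Tᶜ, w q i (b i))
            * ∑ a ∈ cube T, ∏ i ∈ T, w q i (a i) := by
          refine Finset.sum_congr rfl fun b _ => ?_; rw [← Finset.mul_sum]
      _ = _ := by rw [hA]; simp
  rw [key, e1, e2, Finset.sum_mul_sum]
  refine Finset.sum_congr rfl fun a _ => Finset.sum_congr rfl fun b _ => ?_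
  have g1 : (m a b₀ ∈ E₁) ↔ (m a b ∈ E₁) := hmem1 a b₀ b
  have g2 : (m a₀ b ∈ E₂) ↔ (m a b ∈ E₂) := hmem2 a₀ a b
  by_cases h1 : m a b ∈ E₁ <;> by_cases h2 : m a b ∈ E₂ <;>
    · rw [Set.mem_inter_iff]
      simp only [h1, h2, g1, g2, and_true, and_false, if_true, if_false]
      ring
variable {k : ℕ} {L : Fin (k + 1) → ℕ}

def relA (k : ℕ) (L : Fin (k + 1) → ℕ) (A : Finset (MVert k L))
    (ω : MVert k L × MVert k L → Bool) (a b : MVert k L) : Prop :=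
  a ∈ insert (mv0 k L) A ∧ b ∈ insert (mv0 k L) A ∧ a ≠ b ∧ ω (a, b) = true

def reachF (k : ℕ) (L : Fin (k + 1) → ℕ) (A : Finset (MVert k L))
    (ω : MVert k L × MVert k L → Bool) : Finset (MVert k L) :=
  A.filter (fun x => Relation.ReflTransGen (relA k L A ω) (mv0 k L) x)

def Internal (k : ℕ) (L : Fin (k + 1) → ℕ) (S : Finset (MVert k L)) :
    Set (MVert k L × MVert k L → Bool) :=
  {ω | ∀ x ∈ S, Relation.ReflTransGen (relA k L S ω) (mv0 k L) x}

lemma relA_mono {A B : Finset (MVert k L)} (h : A ⊆ B) (ω) (a b : MVert k L) :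
    relA k L A ω a b → relA k L B ω a b := by
  rintro ⟨ha, hb, hne, hω⟩
  exact ⟨Finset.insert_subset_insert _ h ha, Finset.insert_subset_insert _ h hb, hne, hω⟩

lemma reach_char (A S : Finset (MVert k L)) (hv : mv0 k L ∉ A) (hS : S ⊆ A)
    (ω : MVert k L × MVert k L → Bool) :
    reachF k L A ω = S ↔
      ((∀ x ∈ S, Relation.ReflTransGen (relA k L S ω) (mv0 k L) x) ∧
       ∀ a ∈ insert (mv0 k L) S, ∀ b ∈ A \ S, ω (a, b) = false) := by
  constructor
  · intro h
    have hmem : ∀ x, Relation.ReflTransGen (relA k L A ω) (mv0 k L) x →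
        x ∈ insert (mv0 k L) S := by
      intro x hx
      induction hx with
      | refl => exact Finset.mem_insert_self _ _
      | tail hab hbc ih =>
        obtain ⟨hbA, hcA, hne, hω⟩ := hbc
        rcases Finset.mem_insert.mp hcA with hc0 | hcA'
        · exact hc0 ▸ Finset.mem_insert_self _ _
        · have hc : _ ∈ reachF k L A ω :=
            Finset.mem_filter.mpr ⟨hcA', hab.tail ⟨hbA, hcA, hne, hω⟩⟩
          rw [h] at hc
          exact Finset.mem_insert_of_mem hc
    constructor
    · have strengthen : ∀ x, Relation.ReflTransGen (relA k L A ω) (mv0 k L) x →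
          Relation.ReflTransGen (relA k L S ω) (mv0 k L) x := by
        intro x hx
        induction hx with
        | refl => exact Relation.ReflTransGen.refl
        | tail hab hbc ih =>
          obtain ⟨hbA, hcA, hne, hω⟩ := hbc
          exact ih.tail ⟨hmem _ hab, hmem _ (hab.tail ⟨hbA, hcA, hne, hω⟩), hne, hω⟩
      intro x hx
      rw [← h] at hx
      exact strengthen x (Finset.mem_filter.mp hx).2
    · intro a ha b hb
      obtain ⟨hbA, hbS⟩ := Finset.mem_sdiff.mp hb
      by_contra hωt
      have hωt' : ω (a, b) = true := by simpa using hωt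
      have hbv : b ≠ mv0 k L := fun hc => hv (hc ▸ hbA)
      have hne : a ≠ b := by
        rintro rfl
        rcases Finset.mem_insert.mp ha with h0 | haS
        · exact hbv h0
        · exact hbS haS
      have haR : Relation.ReflTransGen (relA k L A ω) (mv0 k L) a := by
        rcases Finset.mem_insert.mp ha with h0 | haS
        · exact h0 ▸ Relation.ReflTransGen.refl
        · rw [← h] at haS
          exact (Finset.mem_filter.mp haS).2
      have haA : a ∈ insert (mv0 k L) A := by
        rcases Finset.mem_insert.mp ha with h0 | haS
        · exact h0 ▸ Finset.mem_insert_self _ _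
        · exact Finset.mem_insert_of_mem (hS haS)
      have : b ∈ reachF k L A ω :=
        Finset.mem_filter.mpr ⟨hbA, haR.tail ⟨haA, Finset.mem_insert_of_mem hbA, hne, hωt'⟩⟩
      rw [h] at this
      exact hbS this
  · rintro ⟨hint, hout⟩
    have hup : ∀ x, Relation.ReflTransGen (relA k L A ω) (mv0 k L) x →
        x ∈ insert (mv0 k L) S := by
      intro x hx
      induction hx with
      | refl => exact Finset.mem_insert_self _ _
      | tail hab hbc ih =>
        obtain ⟨hbA', hcA', hne, hω⟩ := hbc
        rcases Finset.mem_insert.mp hcA' with hc0 | hcA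
        · exact hc0 ▸ Finset.mem_insert_self _ _
        · by_contra hcS'
          have hcS : _ ∈ A \ S := Finset.mem_sdiff.mpr
            ⟨hcA, fun hc => hcS' (Finset.mem_insert_of_mem hc)⟩
          have := hout _ ih _ hcS
          rw [this] at hω
          exact Bool.false_ne_true hω
    refine Finset.Subset.antisymm ?_ ?_
    · intro x hx
      obtain ⟨hxA, hrtg⟩ := Finset.mem_filter.mp hx
      rcases Finset.mem_insert.mp (hup x hrtg) with h0 | hxS
      · exact absurd (h0 ▸ hxA) hv
      · exact hxS
    · intro x hx
      exact Finset.mem_filter.mpr ⟨hS hx, Relation.ReflTransGen.mono (relA_mono hS ω) _ _ (hint x hx)⟩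


def qf (k : ℕ) (L : Fin (k + 1) → ℕ) (p : Fin (k + 1) → Fin (k + 1) → ℝ) :
    MVert k L × MVert k L → ℝ := fun e => p e.1.1 e.2.1

def fS (k : ℕ) (L : Fin (k + 1) → ℕ) (p : Fin (k + 1) → Fin (k + 1) → ℝ)
    (S : Finset (MVert k L)) : ℝ := pr (qf k L p) (Internal k L S)

lemma pr_reach (p : Fin (k + 1) → Fin (k + 1) → ℝ) (A S : Finset (MVert k L))
    (hv : mv0 k L ∉ A) (hS : S ⊆ A) :
    pr (qf k L p) {ω | reachF k L A ω = S} =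
      fS k L p S * ∏ e ∈ (insert (mv0 k L) S) ×ˢ (A \ S), (1 - qf k L p e) := by
  classical
  have hevent : {ω : MVert k L × MVert k L → Bool | reachF k L A ω = S} =
      Internal k L S ∩ {ω | ∀ e ∈ (insert (mv0 k L) S) ×ˢ (A \ S), ω e = false} := by
    ext ω
    rw [Set.mem_setOf_eq, Set.mem_inter_iff, reach_char A S hv hS ω]
    constructor
    · rintro ⟨h1, h2⟩
      refine ⟨h1, ?_⟩
      intro e he
      rw [Finset.mem_product] at he
      exact h2 e.1 he.1 e.2 he.2
    · rintro ⟨h1, h2⟩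
      refine ⟨h1, ?_⟩
      intro a ha b hb
      exact h2 (a, b) (Finset.mem_product.mpr ⟨ha, hb⟩)
  have hdep1 : DependsOn (Internal k L S)
      ((insert (mv0 k L) S) ×ˢ (insert (mv0 k L) S)) := by
    intro ω ω' hagree
    have key : ∀ ω ω' : MVert k L × MVert k L → Bool,
        (∀ e ∈ (insert (mv0 k L) S) ×ˢ (insert (mv0 k L) S), ω e = ω' e) →
        ω ∈ Internal k L S → ω' ∈ Internal k L S := by
      intro ω ω' hag hω x hx
      refine Relation.ReflTransGen.mono ?_ _ _ (hω x hx)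
      rintro a b ⟨ha, hb, hne, hab⟩
      refine ⟨ha, hb, hne, ?_⟩
      rw [← hag (a, b) (Finset.mem_product.mpr ⟨ha, hb⟩)]
      exact hab
    exact ⟨key ω ω' hagree, key ω' ω (fun e he => (hagree e he).symm)⟩
  have hdep2 : ∀ ω ω' : MVert k L × MVert k L → Bool,
      (∀ e ∉ (insert (mv0 k L) S) ×ˢ (insert (mv0 k L) S), ω e = ω' e) →
      (ω ∈ {ω : MVert k L × MVert k L → Bool |
        ∀ e ∈ (insert (mv0 k L) S) ×ˢ (A \ S), ω e = false} ↔
       ω' ∈ {ω : MVert k L × MVert k L → Bool |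
        ∀ e ∈ (insert (mv0 k L) S) ×ˢ (A \ S), ω e = false}) := by
    intro ω ω' hagree
    have hsub : ∀ e ∈ (insert (mv0 k L) S) ×ˢ (A \ S),
        e ∉ ((insert (mv0 k L) S) ×ˢ (insert (mv0 k L) S)) := by
      intro e he
      rw [Finset.mem_product] at he
      intro hc
      rw [Finset.mem_product] at hc
      obtain ⟨heA, heS⟩ := Finset.mem_sdiff.mp he.2
      rcases Finset.mem_insert.mp hc.2 with h0 | hS'
      · exact hv (h0 ▸ heA)
      · exact heS hS'
    constructor
    · intro h e he
      rw [← hagree e (hsub e he)]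
      exact h e he
    · intro h e he
      rw [hagree e (hsub e he)]
      exact h e he
  rw [hevent, pr_inter _ _ _ _ hdep1 hdep2, pr_allFalse]
  rfl

/-- number of type-`i` vertices in `X` -/
def tc (X : Finset (MVert k L)) (i : Fin (k + 1)) : ℕ :=
  (X.filter (fun x => x.1 = i)).card

lemma tc_univ (i : Fin (k + 1)) :
    tc (Finset.univ : Finset (MVert k L)) i = L i + (if i = 0 then 1 else 0) := by
  classical
  have h1 : tc (Finset.univ : Finset (MVert k L)) i
      = Fintype.card {x : MVert k L // x.1 = i} := (Fintype.card_subtype _).symm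
  have e : {x : MVert k L // x.1 = i} ≃ Fin (L i + if i = 0 then 1 else 0) :=
    { toFun := fun x => x.2 ▸ x.1.2
      invFun := fun b => ⟨⟨i, b⟩, rfl⟩
      left_inv := by rintro ⟨⟨j, b⟩, rfl⟩; rfl
      right_inv := fun b => rfl }
  rw [h1, Fintype.card_congr e, Fintype.card_fin]

lemma tc_mono {X Y : Finset (MVert k L)} (h : X ⊆ Y) (i : Fin (k + 1)) :
    tc X i ≤ tc Y i :=
  Finset.card_le_card (Finset.filter_subset_filter _ h)

lemma tc_sdiff {X Y : Finset (MVert k L)} (h : Y ⊆ X) (i : Fin (k + 1)) :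
    tc (X \ Y) i = tc X i - tc Y i := by
  classical
  have : (X \ Y).filter (fun x => x.1 = i) = X.filter (fun x => x.1 = i) \ Y.filter (fun x => x.1 = i) := by
    ext x
    simp only [Finset.mem_filter, Finset.mem_sdiff]
    tauto
  rw [tc, this, Finset.card_sdiff_of_subset (Finset.filter_subset_filter _ h)]
  rfl

lemma tc_erase_v0 (i : Fin (k + 1)) :
    tc ((Finset.univ : Finset (MVert k L)).erase (mv0 k L)) i = L i := by
  classical
  rw [tc, Finset.filter_erase]
  by_cases hi : i = 0
  · subst hi
    have hmem : mv0 k L ∈ (Finset.univ : Finset (MVert k L)).filter (fun x => x.1 = 0) := by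
      simp [mv0]
    rw [Finset.card_erase_of_mem hmem]
    have := tc_univ (L := L) (0 : Fin (k + 1))
    rw [tc] at this
    rw [this]
    simp
  · have hnm : mv0 k L ∉ (Finset.univ : Finset (MVert k L)).filter (fun x => x.1 = i) := by
      simp [mv0]
      intro hc
      exact hi hc.symm
    rw [Finset.erase_eq_of_notMem hnm]
    have := tc_univ (L := L) i
    rw [tc] at this
    rw [this, if_neg hi]
    omega

lemma tc_insert_v0 (S : Finset (MVert k L)) (hv : mv0 k L ∉ S) (i : Fin (k + 1)) :
    tc (insert (mv0 k L) S) i = (if i = 0 then 1 else 0) + tc S i := by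
  classical
  rw [tc, Finset.filter_insert]
  by_cases hi : i = 0
  · subst hi
    rw [if_pos (show (mv0 k L).1 = 0 from rfl)]
    rw [Finset.card_insert_of_notMem (fun hc => hv (Finset.mem_filter.mp hc).1)]
    rw [if_pos rfl]
    simp only [tc]
    omega
  · rw [if_neg (show ¬ (mv0 k L).1 = i from fun hc => hi (hc.symm ▸ rfl))]
    rw [if_neg hi, Nat.zero_add]
    rfl


lemma prod_fiber (X : Finset (MVert k L)) (h : Fin (k + 1) → ℝ) :
    ∏ a ∈ X, h a.1 = ∏ i, h i ^ tc X i := by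
  classical
  rw [← Finset.prod_fiberwise_of_maps_to (t := (Finset.univ : Finset (Fin (k + 1))))
    (g := fun x : MVert k L => x.1) (fun x _ => Finset.mem_univ _) (fun a => h a.1)]
  refine Finset.prod_congr rfl fun i _ => ?_
  have : ∀ x ∈ X.filter (fun x : MVert k L => x.1 = i), h x.1 = h i := by
    intro x hx
    rw [(Finset.mem_filter.mp hx).2]
  rw [Finset.prod_congr rfl this, Finset.prod_const]
  rfl

lemma prod_pairs (p : Fin (k + 1) → Fin (k + 1) → ℝ) (X Y : Finset (MVert k L)) :
    ∏ e ∈ X ×ˢ Y, (1 - qf k L p e) = ∏ i, ∏ j, (1 - p i j) ^ (tc X i * tc Y j) := by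
  classical
  rw [Finset.prod_product]
  have inner : ∀ x ∈ X, ∏ y ∈ Y, (1 - qf k L p (x, y)) = ∏ j, (1 - p x.1 j) ^ tc Y j := by
    intro x _
    exact prod_fiber Y (fun j => 1 - p x.1 j)
  rw [Finset.prod_congr rfl inner,
    prod_fiber X (fun i => ∏ j, (1 - p i j) ^ tc Y j)]
  refine Finset.prod_congr rfl fun i _ => ?_
  rw [← Finset.prod_pow]
  refine Finset.prod_congr rfl fun j _ => ?_
  rw [← pow_mul, mul_comm]

lemma card_subsets (D : Finset (MVert k L)) (m : Fin (k + 1) → ℕ) :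
    ((D.powerset).filter (fun W => ∀ j, tc W j = m j)).card
      = ∏ j, (tc D j).choose (m j) := by
  classical
  have key : ∀ (c : Fin (k + 1) → Finset (MVert k L)),
      (∀ j, c j ⊆ D.filter (fun x => x.1 = j)) →
      ∀ j, (Finset.univ.biUnion c).filter (fun x : MVert k L => x.1 = j) = c j := by
    intro c hc j
    ext x
    simp only [Finset.mem_filter, Finset.mem_biUnion, Finset.mem_univ, true_and]
    constructor
    · rintro ⟨⟨j', hj'⟩, hxj⟩
      have h2 : x.1 = j' := (Finset.mem_filter.mp (hc j' hj')).2
      have h3 : j' = j := by rw [← h2, hxj]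
      exact h3 ▸ hj'
    · intro hx
      exact ⟨⟨j, hx⟩, (Finset.mem_filter.mp (hc j hx)).2⟩
  rw [show ∏ j, (tc D j).choose (m j)
      = ∏ j, ((D.filter (fun x : MVert k L => x.1 = j)).powersetCard (m j)).card by
    exact Finset.prod_congr rfl fun j _ => (Finset.card_powersetCard _ _).symm]
  rw [← Fintype.card_piFinset]
  refine Finset.card_nbij' (fun W j => W.filter (fun x : MVert k L => x.1 = j))
    (fun c => Finset.univ.biUnion c) ?_ ?_ ?_ ?_
  · intro W hW
    rw [Finset.mem_coe, Finset.mem_filter, Finset.mem_powerset] at hW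
    rw [Finset.mem_coe, Fintype.mem_piFinset]
    intro j
    rw [Finset.mem_powersetCard]
    exact ⟨Finset.filter_subset_filter _ hW.1, hW.2 j⟩
  · intro c hc
    rw [Finset.mem_coe, Fintype.mem_piFinset] at hc
    have hc' : ∀ j, c j ⊆ D.filter (fun x : MVert k L => x.1 = j) :=
      fun j => (Finset.mem_powersetCard.mp (hc j)).1
    rw [Finset.mem_coe, Finset.mem_filter, Finset.mem_powerset]
    constructor
    · intro x hx
      obtain ⟨j, _, hj⟩ := Finset.mem_biUnion.mp hx
      exact (Finset.filter_subset _ _) (hc' j hj)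
    · intro j
      rw [tc, key c hc' j]
      exact (Finset.mem_powersetCard.mp (hc j)).2
  · intro W hW
    rw [Finset.mem_coe, Finset.mem_filter, Finset.mem_powerset] at hW
    ext x
    simp only [Finset.mem_biUnion, Finset.mem_univ, true_and, Finset.mem_filter]
    constructor
    · rintro ⟨j, hx, _⟩; exact hx
    · intro hx; exact ⟨x.1, hx, rfl⟩
  · intro c hc
    rw [Finset.mem_coe, Fintype.mem_piFinset] at hc
    funext j
    exact key c (fun j => (Finset.mem_powersetCard.mp (hc j)).1) j

lemma pr_empty {ι' : Type*} [Fintype ι'] (q : ι' → ℝ) : pr q (∅ : Set (ι' → Bool)) = 0 := by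
  unfold pr
  convert Finset.sum_empty
  ext ω
  simp

lemma pr_union {ι' : Type*} [Fintype ι'] (q : ι' → ℝ) (E₁ E₂ : Set (ι' → Bool))
    (h : Disjoint E₁ E₂) : pr q (E₁ ∪ E₂) = pr q E₁ + pr q E₂ := by
  classical
  unfold pr
  rw [← Finset.sum_union ?dis]
  · refine Finset.sum_congr ?_ fun _ _ => rfl
    ext ω
    simp only [Finset.mem_filter, Finset.mem_univ, true_and, Finset.mem_union, Set.mem_union]
  case dis =>
    rw [Finset.disjoint_left]
    intro a h1 h2
    rw [Finset.mem_filter] at h1 h2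
    exact Set.disjoint_left.mp h h1.2 h2.2

lemma pr_fiber {ι' : Type*} [Fintype ι'] {α : Type*} (q : ι' → ℝ)
    (F : (ι' → Bool) → α) (𝒮 : Finset α) :
    pr q {ω | F ω ∈ 𝒮} = ∑ S ∈ 𝒮, pr q {ω | F ω = S} := by
  classical
  induction 𝒮 using Finset.induction with
  | empty =>
    rw [show {ω : ι' → Bool | F ω ∈ (∅ : Finset α)} = (∅ : Set (ι' → Bool)) by ext; simp]
    simp [pr_empty]
  | @insert a s hS ih =>
    have hsplit : {ω : ι' → Bool | F ω ∈ insert a s} = {ω | F ω = a} ∪ {ω | F ω ∈ s} := by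
      ext ω
      simp [Finset.mem_insert]
    have hdisj : Disjoint {ω : ι' → Bool | F ω = a} {ω | F ω ∈ s} := by
      rw [Set.disjoint_left]
      intro ω h1 h2
      exact hS (h1 ▸ h2)
    rw [hsplit, pr_union q _ _ hdisj, ih, Finset.sum_insert hS]


lemma mU_eq_tc (ω : MVert k L × MVert k L → Bool) (i : Fin (k + 1)) :
    mU k L ω i = tc (reachF k L ((Finset.univ : Finset (MVert k L)).erase (mv0 k L)) ω) i := by
  classical
  have hrel : ∀ a b : MVert k L,
      relA k L (Finset.univ.erase (mv0 k L)) ω a b ↔ (a ≠ b ∧ ω (a, b) = true) := by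
    intro a b
    unfold relA
    rw [Finset.insert_erase (Finset.mem_univ (mv0 k L))]
    simp
  have hRTG : ∀ x, Relation.ReflTransGen (relA k L (Finset.univ.erase (mv0 k L)) ω) (mv0 k L) x
      ↔ Relation.ReflTransGen (fun a b : MVert k L => a ≠ b ∧ ω (a, b) = true) (mv0 k L) x := by
    intro x
    constructor
    · exact fun h => Relation.ReflTransGen.mono (fun a b hab => (hrel a b).1 hab) _ _ h
    · exact fun h => Relation.ReflTransGen.mono (fun a b hab => (hrel a b).2 hab) _ _ h
  unfold mU tc reachF
  congr 1
  ext x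
  simp only [Finset.mem_filter, Finset.mem_univ, true_and, Finset.mem_erase, and_true]
  rw [hRTG x]
  tauto

lemma pr_reach_tc (p : Fin (k + 1) → Fin (k + 1) → ℝ) (A S : Finset (MVert k L))
    (hv : mv0 k L ∉ A) (hS : S ⊆ A) :
    pr (qf k L p) {ω | reachF k L A ω = S} =
      fS k L p S * ∏ i, ∏ j, (1 - p i j) ^
        (((if i = 0 then 1 else 0) + tc S i) * (tc A j - tc S j)) := by
  rw [pr_reach p A S hv hS, prod_pairs]
  congr 1
  refine Finset.prod_congr rfl fun i _ => Finset.prod_congr rfl fun j _ => ?_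
  rw [tc_insert_v0 S (fun h => hv (hS h)) i, tc_sdiff hS j]

lemma sum_reach_one (p : Fin (k + 1) → Fin (k + 1) → ℝ) (A : Finset (MVert k L)) :
    ∑ S ∈ A.powerset, pr (qf k L p) {ω | reachF k L A ω = S} = 1 := by
  classical
  rw [← pr_fiber (qf k L p) (reachF k L A) A.powerset]
  have : {ω : MVert k L × MVert k L → Bool | reachF k L A ω ∈ A.powerset} = Set.univ := by
    ext ω
    simp only [Set.mem_setOf_eq, Set.mem_univ, iff_true, Finset.mem_powerset]
    exact Finset.filter_subset _ _
  rw [this, pr_univ]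

end Ball

open Ball in
set_option maxHeartbeats 1000000 in
/-- **Multi-type final size equations** (Ball 1986): for every `ℓ` with `0 ≤ ℓ ≤ L`
coordinatewise,
`∑_{u=0}^{ℓ} [∏ᵢ C(Lᵢ−uᵢ, ℓᵢ−uᵢ)] · P_u · ∏ᵢ∏ⱼ (1−p_{ij})^{−(1[i=1]+uᵢ)(Lⱼ−ℓⱼ)}
  = ∏ᵢ C(Lᵢ, ℓᵢ)`. -/
theorem multitype_final_size_equations (k : ℕ) (L : Fin (k + 1) → ℕ)
    (p : Fin (k + 1) → Fin (k + 1) → ℝ)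
    (hp0 : ∀ i j, 0 ≤ p i j) (hp1 : ∀ i j, p i j < 1)
    (ℓ : Fin (k + 1) → ℕ) (hℓ : ∀ i, ℓ i ≤ L i) :
    ∑ u ∈ Finset.Icc (0 : Fin (k + 1) → ℕ) ℓ,
        (∏ i, (Nat.choose (L i - u i) (ℓ i - u i) : ℝ)) * Pmulti k L p u *
          ∏ i, ∏ j, (1 - p i j) ^
            (-((((if i = 0 then 1 else 0) + u i) * (L j - ℓ j) : ℕ) : ℤ)) =
      ∏ i, (Nat.choose (L i) (ℓ i) : ℝ) := by
  classical
  set A₀ := (Finset.univ : Finset (MVert k L)).erase (mv0 k L) with hA₀def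
  have hvA₀ : mv0 k L ∉ A₀ := Finset.notMem_erase _ _
  have htcA₀ : ∀ j, tc A₀ j = L j := fun j => tc_erase_v0 j
  have hx : ∀ i j, (0:ℝ) < 1 - p i j := fun i j => by have := hp1 i j; linarith
  have hxne : ∀ i j, (1 - p i j) ≠ 0 := fun i j => ne_of_gt (hx i j)
  set G : Finset (MVert k L) → ℝ := fun S =>
    fS k L p S * ∏ i, ∏ j, (1 - p i j) ^
      (((if i = 0 then 1 else 0) + tc S i) * (ℓ j - tc S j)) with hGdef
  set C : Finset (MVert k L) → ℝ := fun S =>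
    ∏ j, ((Nat.choose (L j - tc S j) (L j - ℓ j)) : ℝ) with hCdef
  -- Pmulti decomposition
  have hPm : ∀ u : Fin (k + 1) → ℕ,
      Pmulti k L p u = ∑ S ∈ A₀.powerset.filter (fun S => ∀ i, tc S i = u i),
        pr (qf k L p) {ω | reachF k L A₀ ω = S} := by
    intro u
    have hev : {ω : MVert k L × MVert k L → Bool | ∀ i, mU k L ω i = u i}
        = {ω | reachF k L A₀ ω ∈ A₀.powerset.filter (fun S => ∀ i, tc S i = u i)} := by
      ext ω
      simp only [Set.mem_setOf_eq, Finset.mem_filter, Finset.mem_powerset]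
      constructor
      · intro h
        exact ⟨Finset.filter_subset _ _, fun i => by rw [← mU_eq_tc ω i]; exact h i⟩
      · intro h i
        rw [mU_eq_tc ω i]
        exact h.2 i
    show pr (qf k L p) {ω | ∀ i, mU k L ω i = u i} = _
    rw [hev, pr_fiber]
  -- LHS per-u computation
  have hLHSu : ∀ u ∈ Finset.Icc (0 : Fin (k + 1) → ℕ) ℓ,
      (∏ i, (Nat.choose (L i - u i) (ℓ i - u i) : ℝ)) * Pmulti k L p u *
          ∏ i, ∏ j, (1 - p i j) ^
            (-((((if i = 0 then 1 else 0) + u i) * (L j - ℓ j) : ℕ) : ℤ))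
      = ∑ S ∈ A₀.powerset.filter (fun S => ∀ i, tc S i = u i), C S * G S := by
    intro u hu
    have hu2 : ∀ i, u i ≤ ℓ i := by
      have := (Finset.mem_Icc.mp hu).2
      intro i; exact this i
    rw [hPm u, Finset.mul_sum, Finset.sum_mul]
    refine Finset.sum_congr rfl fun S hS => ?_
    rw [Finset.mem_filter, Finset.mem_powerset] at hS
    obtain ⟨hSsub, hScnt⟩ := hS
    rw [pr_reach_tc p A₀ S hvA₀ hSsub]
    have hexp : ∀ i j, (((if i = 0 then 1 else 0) + tc S i) * (tc A₀ j - tc S j))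
        = (((if i = 0 then 1 else 0) + u i) * (L j - u j)) := by
      intro i j
      rw [hScnt i, hScnt j, htcA₀ j]
    have hcomb : (∏ i, ∏ j, (1 - p i j) ^
          (((if i = 0 then 1 else 0) + tc S i) * (tc A₀ j - tc S j))) *
        (∏ i, ∏ j, (1 - p i j) ^
          (-((((if i = 0 then 1 else 0) + u i) * (L j - ℓ j) : ℕ) : ℤ)))
        = ∏ i, ∏ j, (1 - p i j) ^
          (((if i = 0 then 1 else 0) + tc S i) * (ℓ j - tc S j)) := by
      rw [← Finset.prod_mul_distrib]
      refine Finset.prod_congr rfl fun i _ => ?_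
      rw [← Finset.prod_mul_distrib]
      refine Finset.prod_congr rfl fun j _ => ?_
      rw [hexp i j, hScnt i, hScnt j]
      have hsplit : L j - u j = (L j - ℓ j) + (ℓ j - u j) := by
        have := hℓ j; have := hu2 j; omega
      rw [hsplit, Nat.mul_add, pow_add, zpow_neg, zpow_natCast]
      rw [mul_comm ((1 - p i j) ^ (((if i = 0 then 1 else 0) + u i) * (L j - ℓ j)))
        ((1 - p i j) ^ (((if i = 0 then 1 else 0) + u i) * (ℓ j - u j))), mul_assoc,
        mul_inv_cancel₀ (pow_ne_zero _ (hxne i j)), mul_one]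
    have hC : (∏ i, (Nat.choose (L i - u i) (ℓ i - u i) : ℝ)) = C S := by
      rw [hCdef]
      refine Finset.prod_congr rfl fun j _ => ?_
      rw [hScnt j]
      congr 1
      have h1 : ℓ j - u j ≤ L j - u j := by have := hℓ j; have := hu2 j; omega
      have h2 : (L j - u j) - (ℓ j - u j) = L j - ℓ j := by
        have := hℓ j; have := hu2 j; omega
      rw [← h2, Nat.choose_symm h1]
    calc (∏ i, (Nat.choose (L i - u i) (ℓ i - u i) : ℝ)) *
          (fS k L p S * ∏ i, ∏ j, (1 - p i j) ^
            (((if i = 0 then 1 else 0) + tc S i) * (tc A₀ j - tc S j))) *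
          ∏ i, ∏ j, (1 - p i j) ^
            (-((((if i = 0 then 1 else 0) + u i) * (L j - ℓ j) : ℕ) : ℤ))
        = (∏ i, (Nat.choose (L i - u i) (ℓ i - u i) : ℝ)) * (fS k L p S *
            ((∏ i, ∏ j, (1 - p i j) ^
              (((if i = 0 then 1 else 0) + tc S i) * (tc A₀ j - tc S j))) *
            (∏ i, ∏ j, (1 - p i j) ^
              (-((((if i = 0 then 1 else 0) + u i) * (L j - ℓ j) : ℕ) : ℤ))))) := by ring
      _ = C S * G S := by rw [hcomb, hC, hGdef]
  rw [Finset.sum_congr rfl hLHSu]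
  -- fiberwise regrouping over u
  have hmaps : ∀ S ∈ A₀.powerset.filter (fun S => ∀ i, tc S i ≤ ℓ i),
      (fun i => tc S i) ∈ Finset.Icc (0 : Fin (k + 1) → ℕ) ℓ := by
    intro S hS
    rw [Finset.mem_filter] at hS
    rw [Finset.mem_Icc]
    exact ⟨fun i => Nat.zero_le _, fun i => hS.2 i⟩
  have hfibersum :
      ∑ u ∈ Finset.Icc (0 : Fin (k + 1) → ℕ) ℓ,
        ∑ S ∈ A₀.powerset.filter (fun S => ∀ i, tc S i = u i), C S * G S
      = ∑ S ∈ A₀.powerset, C S * G S := by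
    have hf : ∀ u ∈ Finset.Icc (0 : Fin (k + 1) → ℕ) ℓ,
        A₀.powerset.filter (fun S => ∀ i, tc S i = u i)
        = (A₀.powerset.filter (fun S => ∀ i, tc S i ≤ ℓ i)).filter
            (fun S => (fun i => tc S i) = u) := by
      intro u hu
      have hu2 : ∀ i, u i ≤ ℓ i := (Finset.mem_Icc.mp hu).2
      ext S
      simp only [Finset.mem_filter, Finset.mem_powerset]
      constructor
      · rintro ⟨h1, h2⟩
        exact ⟨⟨h1, fun i => (h2 i) ▸ hu2 i⟩, funext h2⟩
      · rintro ⟨⟨h1, _⟩, h3⟩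
        exact ⟨h1, fun i => congrFun h3 i⟩
    calc ∑ u ∈ Finset.Icc (0 : Fin (k + 1) → ℕ) ℓ,
          ∑ S ∈ A₀.powerset.filter (fun S => ∀ i, tc S i = u i), C S * G S
        = ∑ u ∈ Finset.Icc (0 : Fin (k + 1) → ℕ) ℓ,
          ∑ S ∈ (A₀.powerset.filter (fun S => ∀ i, tc S i ≤ ℓ i)).filter
              (fun S => (fun i => tc S i) = u), C S * G S :=
          Finset.sum_congr rfl fun u hu => by rw [hf u hu]
      _ = ∑ S ∈ A₀.powerset.filter (fun S => ∀ i, tc S i ≤ ℓ i), C S * G S :=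
          Finset.sum_fiberwise_of_maps_to hmaps (fun S => C S * G S)
      _ = ∑ S ∈ A₀.powerset, C S * G S := ?_
    refine Finset.sum_subset (Finset.filter_subset _ _) ?_
    intro S hS hS'
    have hnot : ¬ ∀ i, tc S i ≤ ℓ i := fun hc => hS' (Finset.mem_filter.mpr ⟨hS, hc⟩)
    push_neg at hnot
    obtain ⟨i, hi⟩ := hnot
    have hle : tc S i ≤ L i := by
      have := tc_mono (Finset.mem_powerset.mp hS) i
      rwa [htcA₀ i] at this
    have hzero : Nat.choose (L i - tc S i) (L i - ℓ i) = 0 :=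
      Nat.choose_eq_zero_of_lt (by omega)
    have hCzero : C S = 0 := by
      rw [hCdef]
      refine Finset.prod_eq_zero (Finset.mem_univ i) ?_
      rw [hzero]
      simp
    rw [hCzero, zero_mul]
  rw [hfibersum]
  -- RHS counting
  set 𝒲 := A₀.powerset.filter (fun W => ∀ j, tc W j = L j - ℓ j) with h𝒲
  have hterm : ∀ W ∈ 𝒲, ∀ S ∈ (A₀ \ W).powerset,
      pr (qf k L p) {ω | reachF k L (A₀ \ W) ω = S} = G S := by
    intro W hW S hS
    rw [h𝒲, Finset.mem_filter, Finset.mem_powerset] at hW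
    rw [Finset.mem_powerset] at hS
    rw [pr_reach_tc p (A₀ \ W) S (fun hc => hvA₀ (Finset.sdiff_subset hc)) hS, hGdef]
    congr 1
    refine Finset.prod_congr rfl fun i _ => Finset.prod_congr rfl fun j _ => ?_
    congr 2
    rw [tc_sdiff hW.1 j, htcA₀ j, hW.2 j]
    have := hℓ j
    omega
  have hcardW : (𝒲.card : ℝ) = ∏ i, ((L i).choose (ℓ i) : ℝ) := by
    rw [h𝒲, card_subsets A₀ (fun j => L j - ℓ j)]
    push_cast
    refine Finset.prod_congr rfl fun j _ => ?_
    rw [htcA₀ j, Nat.choose_symm (hℓ j)]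
  calc ∑ S ∈ A₀.powerset, C S * G S
      = ∑ S ∈ A₀.powerset, ∑ W ∈ 𝒲.filter (fun W => S ⊆ A₀ \ W), G S := by
        refine Finset.sum_congr rfl fun S hS => ?_
        rw [Finset.mem_powerset] at hS
        rw [Finset.sum_const, nsmul_eq_mul]
        congr 1
        have hfeq : 𝒲.filter (fun W => S ⊆ A₀ \ W)
            = ((A₀ \ S).powerset).filter (fun W => ∀ j, tc W j = L j - ℓ j) := by
          ext W
          simp only [h𝒲, Finset.mem_filter, Finset.mem_powerset]
          constructor
          · rintro ⟨⟨hWA, hcnt⟩, hSW⟩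
            refine ⟨?_, hcnt⟩
            intro x hx
            rw [Finset.mem_sdiff]
            refine ⟨hWA hx, fun hxS => ?_⟩
            have h4 := hSW hxS
            rw [Finset.mem_sdiff] at h4
            exact h4.2 hx
          · rintro ⟨hWAS, hcnt⟩
            refine ⟨⟨hWAS.trans Finset.sdiff_subset, hcnt⟩, ?_⟩
            intro x hxS
            rw [Finset.mem_sdiff]
            refine ⟨hS hxS, fun hxW => ?_⟩
            have h4 := hWAS hxW
            rw [Finset.mem_sdiff] at h4
            exact h4.2 hxS
        rw [hfeq, card_subsets (A₀ \ S) (fun j => L j - ℓ j), hCdef]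
        push_cast
        refine Finset.prod_congr rfl fun j _ => ?_
        rw [tc_sdiff hS j, htcA₀ j]
    _ = ∑ W ∈ 𝒲, ∑ S ∈ (A₀ \ W).powerset, G S := by
        refine (Finset.sum_comm' ?_).symm
        intro W S
        simp only [Finset.mem_filter, Finset.mem_powerset]
        constructor
        · rintro ⟨hW, hS⟩
          exact ⟨⟨hW, hS⟩, hS.trans Finset.sdiff_subset⟩
        · rintro ⟨⟨hW, hS⟩, _⟩
          exact ⟨hW, hS⟩
    _ = ∑ W ∈ 𝒲, (1:ℝ) := by
        refine Finset.sum_congr rfl fun W hW => ?_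
        rw [← sum_reach_one p (A₀ \ W)]
        exact Finset.sum_congr rfl fun S hS => (hterm W hW S hS).symm
    _ = (𝒲.card : ℝ) := by rw [Finset.sum_const, nsmul_eq_mul, mul_one]
    _ = ∏ i, ((L i).choose (ℓ i) : ℝ) := hcardW
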